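/- For τ ≥ 0 and every natural number k, the Chebyshev coefficient c_k(τ) = (2/π)∫₀^π cos(kθ) exp(−τ(cos θ+1)) dθ satisfies |c_k(τ)| ≤ 2 (τ/2)^k exp(−τ) cosh(τ) / k!. -/

import Mathlib

/-- The `k`-th Chebyshev coefficient of `t ↦ exp (-τ (t+1))` on `[-1,1]`. -/
noncomputable def chebCoeff (τ : ℝ) (k : ℕ) : ℝ :=
  (2 / Real.pi) * ∫ θ in (0:ℝ)..Real.pi,
    Real.cos (k * θ) * Real.exp (-τ * (Real.cos θ + 1))

/-!
Expanding `exp (x cos θ)` in its power series and integrating termwise, the moments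
`∫₀^π cos (kθ) cosⁿ θ dθ` equal `π 2⁻ⁿ (n choose (n-k)/2)` when `n - k` is even and nonnegative and
vanish otherwise. Hence `∫₀^π cos (kθ) exp (x cos θ) dθ = π Σᵢ (x/2)^(k+2i) / (i! (k+i)!)`, the
modified Bessel function `π I_k(x)`. Since `k! (2i)! ≤ 4^i i! (k+i)!`, the `i`-th term is at most
`(|x|/2)^k / k! · |x|^(2i) / (2i)!`, and these sum to `(|x|/2)^k / k! · cosh x`.
-/

open Real
open scoped Nat

noncomputable def cosPowMoment (n k : ℕ) : ℝ :=
  if k ≤ n ∧ (n - k) % 2 = 0 then π / 2 ^ n * n.choose ((n - k) / 2) else 0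

lemma cosPowMoment_succ_zero (n : ℕ) : cosPowMoment (n + 1) 0 = cosPowMoment n 1 := by
  unfold cosPowMoment
  rcases Nat.even_or_odd' n with ⟨m, rfl | rfl⟩
  · rw [if_neg (by omega), if_neg (by omega)]
  · rw [if_pos (by omega), if_pos (by omega), show (2 * m + 1 + 1 - 0) / 2 = m + 1 by omega,
      show (2 * m + 1 - 1) / 2 = m by omega, Nat.choose_succ_succ, Nat.choose_symm_half]
    push_cast
    ring

lemma cosPowMoment_succ_succ (n j : ℕ) :
    cosPowMoment (n + 1) (j + 1) = (cosPowMoment n (j + 2) + cosPowMoment n j) / 2 := by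
  unfold cosPowMoment
  by_cases h : j ≤ n ∧ (n - j) % 2 = 0
  · rw [if_pos (by omega), if_pos h]
    obtain rfl | hj := eq_or_lt_of_le h.1
    · rw [if_neg (by omega)]
      simp only [Nat.sub_self, Nat.zero_div, Nat.choose_zero_right, pow_succ]
      ring
    · obtain ⟨m, hm⟩ : ∃ m, (n - j) / 2 = m + 1 := ⟨(n - j) / 2 - 1, by omega⟩
      rw [if_pos (by omega), show (n + 1 - (j + 1)) / 2 = m + 1 by omega,
        show (n - (j + 2)) / 2 = m by omega, hm, Nat.choose_succ_succ, pow_succ]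
      push_cast
      ring
  · rw [if_neg (by omega), if_neg (by omega), if_neg h]
    simp

lemma integral_cos_nat_mul (k : ℕ) :
    ∫ θ in (0:ℝ)..π, cos (k * θ) = if k = 0 then π else 0 := by
  rcases Nat.eq_zero_or_pos k with rfl | hk
  · simp
  · rw [intervalIntegral.integral_comp_mul_left cos (Nat.cast_ne_zero.2 hk.ne')]
    simp [sin_nat_mul_pi, hk.ne']

lemma intervalIntegrable_cos_mul_cos_pow (n k : ℕ) (a b : ℝ) :
    IntervalIntegrable (fun θ => cos (k * θ) * cos θ ^ n) MeasureTheory.volume a b :=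
  (by fun_prop : Continuous fun θ => cos (k * θ) * cos θ ^ n).intervalIntegrable a b

lemma integral_cos_mul_cos_pow (n k : ℕ) :
    ∫ θ in (0:ℝ)..π, cos (k * θ) * cos θ ^ n = cosPowMoment n k := by
  induction n generalizing k with
  | zero =>
    simp only [pow_zero, mul_one, integral_cos_nat_mul, cosPowMoment]
    rcases Nat.eq_zero_or_pos k with rfl | hk
    · simp
    · rw [if_neg hk.ne', if_neg (by omega)]
  | succ n ih =>
    cases k with
    | zero =>
      rw [cosPowMoment_succ_zero, ← ih]
      congr 1 with θ
      simp [pow_succ, mul_comm]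
    | succ j =>
      have h : ∀ θ : ℝ, cos ((j + 1 : ℕ) * θ) * cos θ ^ (n + 1) =
          (cos ((j + 2 : ℕ) * θ) * cos θ ^ n + cos (j * θ) * cos θ ^ n) / 2 := fun θ => by
        rw [show ((j + 2 : ℕ) : ℝ) * θ = (j + 1 : ℕ) * θ + θ by push_cast; ring,
          show (j : ℝ) * θ = (j + 1 : ℕ) * θ - θ by push_cast; ring, cos_add, cos_sub, pow_succ]
        ring
      simp_rw [h]
      rw [intervalIntegral.integral_div, intervalIntegral.integral_add
        (intervalIntegrable_cos_mul_cos_pow _ _ _ _) (intervalIntegrable_cos_mul_cos_pow _ _ _ _),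
        ih, ih, cosPowMoment_succ_succ]

lemma cosPowMoment_nonneg (n k : ℕ) : 0 ≤ cosPowMoment n k := by
  unfold cosPowMoment
  split <;> positivity

lemma cosPowMoment_le_pi (n k : ℕ) : cosPowMoment n k ≤ π := by
  unfold cosPowMoment
  split
  · calc π / 2 ^ n * n.choose ((n - k) / 2) ≤ π / 2 ^ n * 2 ^ n := by
          gcongr
          exact_mod_cast Nat.choose_le_two_pow n _
      _ = π := by field_simp
  · exact pi_pos.le

lemma hasSum_integral_cos_mul_exp (x : ℝ) (k : ℕ) :
    HasSum (fun n => x ^ n / n ! * cosPowMoment n k)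
      (∫ θ in (0:ℝ)..π, cos (k * θ) * exp (x * cos θ)) := by
  simp_rw [← integral_cos_mul_cos_pow, ← intervalIntegral.integral_const_mul]
  refine intervalIntegral.hasSum_integral_of_dominated_convergence (fun n _ => |x| ^ n / n !)
    (fun n => (by fun_prop : Continuous _).aestronglyMeasurable) (fun n => ?_)
    (.of_forall fun _ _ => summable_pow_div_factorial |x|) intervalIntegrable_const
    (.of_forall fun θ _ => ?_)
  · refine .of_forall fun θ _ => ?_
    rw [norm_mul, norm_div, norm_pow, Real.norm_eq_abs, RCLike.norm_natCast]
    calc |x| ^ n / n ! * ‖cos (k * θ) * cos θ ^ n‖ ≤ |x| ^ n / n ! * 1 := by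
          gcongr
          rw [norm_mul, norm_pow, Real.norm_eq_abs, Real.norm_eq_abs]
          exact mul_le_one₀ (abs_cos_le_one _) (by positivity)
            (pow_le_one₀ (abs_nonneg _) (abs_cos_le_one _))
      _ = |x| ^ n / n ! := mul_one _
  · have hexp := (NormedSpace.expSeries_div_hasSum_exp (x * cos θ)).mul_left (cos (k * θ))
    rw [← Real.exp_eq_exp_ℝ] at hexp
    exact hexp.congr_fun fun n => by ring

lemma summable_pow_div_factorial_mul_cosPowMoment (t : ℝ) (k : ℕ) :
    Summable fun n => |t| ^ n / n ! * cosPowMoment n k :=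
  .of_nonneg_of_le (fun n => mul_nonneg (by positivity) (cosPowMoment_nonneg n k))
    (fun n => mul_le_mul_of_nonneg_left (cosPowMoment_le_pi n k) (by positivity))
    ((summable_pow_div_factorial |t|).mul_right π)

lemma choose_mul_factorial_mul_factorial_le (k i : ℕ) :
    (k + 2 * i).choose i * (k ! * (2 * i)!) ≤ (k + 2 * i)! * 4 ^ i := by
  have hfact : (k + 2 * i)! = (k + 2 * i).choose i * (k + i)! * i ! := by
    rw [show k + 2 * i = k + i + i by ring, Nat.add_choose_mul_factorial_mul_factorial]
  have hcentral : (2 * i)! = i.centralBinom * i ! * i ! := by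
    rw [Nat.centralBinom, two_mul, Nat.add_choose_mul_factorial_mul_factorial]
  have hdvd : k ! * i ! ≤ (k + i)! :=
    Nat.le_of_dvd (Nat.factorial_pos _) (Nat.factorial_mul_factorial_dvd_factorial_add k i)
  rw [hfact, hcentral]
  calc (k + 2 * i).choose i * (k ! * (i.centralBinom * i ! * i !))
      = i.centralBinom * ((k + 2 * i).choose i * (k ! * i !) * i !) := by ring
    _ ≤ ((k + 2 * i).choose i * (k + i)! * i !) * 4 ^ i := by
      rw [mul_comm _ (4 ^ i)]
      gcongr
      exact Nat.centralBinom_le_four_pow i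

lemma pow_div_factorial_mul_cosPowMoment_le {t : ℝ} (ht : 0 ≤ t) (k i : ℕ) :
    t ^ (k + 2 * i) / (k + 2 * i)! * cosPowMoment (k + 2 * i) k
      ≤ π * (t / 2) ^ k / k ! * (t ^ (2 * i) / (2 * i)!) := by
  rw [cosPowMoment, if_pos ⟨by omega, by omega⟩, show (k + 2 * i - k) / 2 = i by omega]
  have hcoeff : ((k + 2 * i).choose i : ℝ) / ((k + 2 * i)! * 4 ^ i) ≤ 1 / (k ! * (2 * i)!) := by
    rw [div_le_div_iff₀ (by positivity) (by positivity), one_mul]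
    exact_mod_cast choose_mul_factorial_mul_factorial_le k i
  have hpow : (2 : ℝ) ^ (k + 2 * i) = 2 ^ k * 4 ^ i := by
    rw [pow_add, pow_mul]
    norm_num
  calc t ^ (k + 2 * i) / (k + 2 * i)! * (π / 2 ^ (k + 2 * i) * (k + 2 * i).choose i)
      = π * t ^ (k + 2 * i) / 2 ^ k * ((k + 2 * i).choose i / ((k + 2 * i)! * 4 ^ i)) := by
        rw [hpow]
        ring
    _ ≤ π * t ^ (k + 2 * i) / 2 ^ k * (1 / (k ! * (2 * i)!)) := by gcongr
    _ = π * (t / 2) ^ k / k ! * (t ^ (2 * i) / (2 * i)!) := by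
        rw [div_pow, pow_add]
        ring

lemma tsum_pow_div_factorial_mul_cosPowMoment_le {t : ℝ} (ht : 0 ≤ t) (k : ℕ) :
    ∑' n, t ^ n / n ! * cosPowMoment n k ≤ π * (t / 2) ^ k / k ! * cosh t := by
  have hinj : Function.Injective fun i => k + 2 * i := fun a b h => by simp only at h; omega
  have hsupp : Function.support (fun n => t ^ n / n ! * cosPowMoment n k) ⊆
      Set.range fun i => k + 2 * i := fun n hn => by
    by_contra hn'
    refine hn (mul_eq_zero_of_right _ (if_neg fun ⟨_, _⟩ => hn' ⟨(n - k) / 2, ?_⟩))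
    show k + 2 * ((n - k) / 2) = n
    omega
  have hsummable := summable_pow_div_factorial_mul_cosPowMoment t k
  rw [abs_of_nonneg ht] at hsummable
  rw [← hinj.tsum_eq hsupp, ← ((hasSum_cosh t).mul_left _).tsum_eq]
  exact (hsummable.comp_injective hinj).tsum_le_tsum (pow_div_factorial_mul_cosPowMoment_le ht k)
    ((hasSum_cosh t).mul_left _).summable

lemma abs_integral_cos_mul_exp_le (x : ℝ) (k : ℕ) :
    |∫ θ in (0:ℝ)..π, cos (k * θ) * exp (x * cos θ)| ≤ π * (|x| / 2) ^ k / k ! * cosh x := by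
  have hnorm (n : ℕ) : ‖x ^ n / n ! * cosPowMoment n k‖ = |x| ^ n / n ! * cosPowMoment n k := by
    rw [norm_eq_abs, abs_mul, abs_div, abs_pow, Nat.abs_cast,
      abs_of_nonneg (cosPowMoment_nonneg n k)]
  rw [← (hasSum_integral_cos_mul_exp x k).tsum_eq, ← cosh_abs x, ← Real.norm_eq_abs]
  calc ‖∑' n, x ^ n / n ! * cosPowMoment n k‖
      ≤ ∑' n, ‖x ^ n / n ! * cosPowMoment n k‖ := norm_tsum_le_tsum_norm
        (by simpa only [hnorm] using summable_pow_div_factorial_mul_cosPowMoment x k)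
    _ = ∑' n, |x| ^ n / n ! * cosPowMoment n k := by simp only [hnorm]
    _ ≤ π * (|x| / 2) ^ k / k ! * cosh |x| :=
        tsum_pow_div_factorial_mul_cosPowMoment_le (abs_nonneg x) k

lemma chebCoeff_eq_mul_integral (τ : ℝ) (k : ℕ) :
    chebCoeff τ k = 2 / π * exp (-τ) * ∫ θ in (0:ℝ)..π, cos (k * θ) * exp (-τ * cos θ) := by
  rw [chebCoeff, mul_assoc, ← intervalIntegral.integral_const_mul (exp (-τ))]
  congr 1
  refine intervalIntegral.integral_congr fun θ _ => ?_
  rw [mul_add, mul_one, exp_add]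
  ring

theorem stmt_18 (τ : ℝ) (hτ : 0 ≤ τ) (k : ℕ) :
    |chebCoeff τ k| ≤ 2 * (τ / 2) ^ k * Real.exp (-τ) * Real.cosh τ / k.factorial := by
  have hbound := abs_integral_cos_mul_exp_le (-τ) k
  rw [abs_neg, abs_of_nonneg hτ, cosh_neg] at hbound
  rw [chebCoeff_eq_mul_integral, abs_mul, abs_of_nonneg (by positivity)]
  calc 2 / π * exp (-τ) * |∫ θ in (0:ℝ)..π, cos (k * θ) * exp (-τ * cos θ)|
      ≤ 2 / π * exp (-τ) * (π * (τ / 2) ^ k / k ! * cosh τ) := by gcongr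
    _ = 2 * (τ / 2) ^ k * exp (-τ) * cosh τ / k ! := by
        field_simp
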